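/- arXiv:2302.03059 — 7 statements merged into one kernel-verified Lean document; each statement's English description precedes it below -/
import Mathlib

section
/- The map T₁ : (ℂ \ {0})³ → (ℂ \ {0})³ defined by T₁(x,y,z) = (y, x, y·z·x⁻¹) satisfies the tetrahedron equation T¹²³ ∘ T¹⁴⁵ ∘ T²⁴⁶ ∘ T³⁵⁶ = T³⁵⁶ ∘ T²⁴⁶ ∘ T¹⁴⁵ ∘ T¹²³, i.e. it is a tetrahedron map. -/
section Tetra

variable {X : Type*}

/-- `T` acting on factors 1,2,3 of `X⁶`. -/
def lift123 (T : X × X × X → X × X × X) :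
    X × X × X × X × X × X → X × X × X × X × X × X
  | (a, b, c, d, e, f) =>
    match T (a, b, c) with
    | (a', b', c') => (a', b', c', d, e, f)

/-- `T` acting on factors 1,4,5 of `X⁶`. -/
def lift145 (T : X × X × X → X × X × X) :
    X × X × X × X × X × X → X × X × X × X × X × X
  | (a, b, c, d, e, f) =>
    match T (a, d, e) with
    | (a', d', e') => (a', b, c, d', e', f)

/-- `T` acting on factors 2,4,6 of `X⁶`. -/
def lift246 (T : X × X × X → X × X × X) :
    X × X × X × X × X × X → X × X × X × X × X × X
  | (a, b, c, d, e, f) =>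
    match T (b, d, f) with
    | (b', d', f') => (a, b', c, d', e, f')

/-- `T` acting on factors 3,5,6 of `X⁶`. -/
def lift356 (T : X × X × X → X × X × X) :
    X × X × X × X × X × X → X × X × X × X × X × X
  | (a, b, c, d, e, f) =>
    match T (c, e, f) with
    | (c', e', f') => (a, b, c', d, e', f')

/-- The Zamolodchikov tetrahedron equation for a map `T : X³ → X³`. -/
def IsTetrahedronMap (T : X × X × X → X × X × X) : Prop :=
  lift123 T ∘ lift145 T ∘ lift246 T ∘ lift356 T =
    lift356 T ∘ lift246 T ∘ lift145 T ∘ lift123 T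

end Tetra

/-- The map `T₁(x,y,z) = (y, x, y·z·x⁻¹)` on `(ℂ \ {0})³`. -/
def T1 : ℂˣ × ℂˣ × ℂˣ → ℂˣ × ℂˣ × ℂˣ :=
  fun (x, y, z) => (y, x, y * z * x⁻¹)

/-- Both composites send `(a, b, c, d, e, f)` to
`(d, b, d e b⁻¹, a, b c a⁻¹, d e f c⁻¹ b⁻¹)`. -/
theorem isTetrahedronMap_swap_mul_mul_inv (G : Type*) [Group G] :
    IsTetrahedronMap fun ((x, y, z) : G × G × G) => (y, x, y * z * x⁻¹) := by
  funext ⟨a, b, c, d, e, f⟩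
  simp only [Function.comp_apply, lift123, lift145, lift246, lift356, Prod.mk.injEq, true_and]
  group

theorem T1_isTetrahedronMap : IsTetrahedronMap T1 :=
  isTetrahedronMap_swap_mul_mul_inv ℂˣ
end

section
/- Let T₁(x,y,z) = (y, x, y·z·x⁻¹), T₂(x,y,z) = (x·y·z⁻¹, z, y), T₃(x,y,z) = (x², y·x⁻¹, x·z), T₄(x,y,z) = (x·z, y·z⁻¹, z²) be maps (ℂ \ {0})³ → (ℂ \ {0})³. Then the maps T₁ and T₂ are involutive (Tᵢ ∘ Tᵢ = id for i = 1,2), and the functions I₁(x,y,z) = x·y and I₂(x,y,z) = y·z are invariants of each of T₁, T₂, T₃, T₄, i.e. Iⱼ ∘ Tᵢ = Iⱼ for j = 1,2 and i = 1,2,3,4. -/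
def T2 : ℂˣ × ℂˣ × ℂˣ → ℂˣ × ℂˣ × ℂˣ := fun (x, y, z) => (x * y * z⁻¹, z, y)

def T3 : ℂˣ × ℂˣ × ℂˣ → ℂˣ × ℂˣ × ℂˣ := fun (x, y, z) => (x ^ 2, y * x⁻¹, x * z)

def T4 : ℂˣ × ℂˣ × ℂˣ → ℂˣ × ℂˣ × ℂˣ := fun (x, y, z) => (x * z, y * z⁻¹, z ^ 2)

/-- The invariant `I₁(x,y,z) = x·y`. -/
def I1 : ℂˣ × ℂˣ × ℂˣ → ℂ := fun (x, y, _) => (x : ℂ) * (y : ℂ)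

/-- The invariant `I₂(x,y,z) = y·z`. -/
def I2 : ℂˣ × ℂˣ × ℂˣ → ℂ := fun (_, y, z) => (y : ℂ) * (z : ℂ)
lemma T1_involutive : Function.Involutive T1 := fun ⟨x, y, z⟩ => by
  simp [T1]

lemma T2_involutive : Function.Involutive T2 := fun ⟨x, y, z⟩ => by
  simp [T2]

lemma I1_comp_eq_self_of_mul_eq {T : ℂˣ × ℂˣ × ℂˣ → ℂˣ × ℂˣ × ℂˣ}
    (h : ∀ p, (T p).1 * (T p).2.1 = p.1 * p.2.1) : I1 ∘ T = I1 :=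
  funext fun p => congrArg Units.val (h p)

lemma I2_comp_eq_self_of_mul_eq {T : ℂˣ × ℂˣ × ℂˣ → ℂˣ × ℂˣ × ℂˣ}
    (h : ∀ p, (T p).2.1 * (T p).2.2 = p.2.1 * p.2.2) : I2 ∘ T = I2 :=
  funext fun p => congrArg Units.val (h p)

lemma I1_comp_T1 : I1 ∘ T1 = I1 :=
  I1_comp_eq_self_of_mul_eq fun ⟨x, y, _⟩ => mul_comm y x

lemma I1_comp_T2 : I1 ∘ T2 = I1 :=
  I1_comp_eq_self_of_mul_eq fun ⟨x, y, z⟩ => by simp [T2]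

lemma I1_comp_T3 : I1 ∘ T3 = I1 :=
  I1_comp_eq_self_of_mul_eq fun ⟨x, y, _⟩ =>
    show x ^ 2 * (y * x⁻¹) = x * y by rw [mul_comm y, ← mul_assoc, sq, mul_inv_cancel_right]

lemma I1_comp_T4 : I1 ∘ T4 = I1 :=
  I1_comp_eq_self_of_mul_eq fun ⟨x, y, z⟩ =>
    show x * z * (y * z⁻¹) = x * y by rw [mul_comm y, ← mul_assoc, mul_inv_cancel_right]

lemma I2_comp_T1 : I2 ∘ T1 = I2 :=
  I2_comp_eq_self_of_mul_eq fun ⟨x, y, z⟩ => by simp [T1]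

lemma I2_comp_T2 : I2 ∘ T2 = I2 :=
  I2_comp_eq_self_of_mul_eq fun ⟨_, y, z⟩ => mul_comm z y

lemma I2_comp_T3 : I2 ∘ T3 = I2 :=
  I2_comp_eq_self_of_mul_eq fun ⟨x, y, z⟩ => by simp [T3]

lemma I2_comp_T4 : I2 ∘ T4 = I2 :=
  I2_comp_eq_self_of_mul_eq fun ⟨_, y, z⟩ =>
    show y * z⁻¹ * z ^ 2 = y * z by rw [sq, ← mul_assoc, inv_mul_cancel_right]

theorem T1_T2_involutive_and_invariants :
    (T1 ∘ T1 = id) ∧ (T2 ∘ T2 = id) ∧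
    (I1 ∘ T1 = I1) ∧ (I1 ∘ T2 = I1) ∧ (I1 ∘ T3 = I1) ∧ (I1 ∘ T4 = I1) ∧
    (I2 ∘ T1 = I2) ∧ (I2 ∘ T2 = I2) ∧ (I2 ∘ T3 = I2) ∧ (I2 ∘ T4 = I2) :=
  ⟨T1_involutive.comp_self, T2_involutive.comp_self, I1_comp_T1, I1_comp_T2, I1_comp_T3,
    I1_comp_T4, I2_comp_T1, I2_comp_T2, I2_comp_T3, I2_comp_T4⟩
end

section
/- Let L₁₂(x), L₁₃(x), L₂₃(x) be the 3×3 complex matrices L₁₂(x) = [[x,0,0],[0,x⁻¹,0],[0,0,1]], L₁₃(x) = [[x,0,0],[0,1,0],[0,0,x⁻¹]], L₂₃(x) = [[1,0,0],[0,x,0],[0,0,x⁻¹]] for x ∈ ℂ \ {0}. Then for each of the four maps T₁(x,y,z) = (y, x, y·z·x⁻¹), T₂(x,y,z) = (x·y·z⁻¹, z, y), T₃(x,y,z) = (x², y·x⁻¹, x·z), T₄(x,y,z) = (x·z, y·z⁻¹, z²) on (ℂ \ {0})³, the relation (u,v,w) = Tᵢ(x,y,z) implies the matrix identity L₁₂(u)·L₁₃(v)·L₂₃(w)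 = L₂₃(z)·L₁₃(y)·L₁₂(x). -/
noncomputable section

def L12 (x : ℂˣ) : Matrix (Fin 3) (Fin 3) ℂ :=
  !![(x : ℂ), 0, 0; 0, (x : ℂ)⁻¹, 0; 0, 0, 1]

def L13 (x : ℂˣ) : Matrix (Fin 3) (Fin 3) ℂ :=
  !![(x : ℂ), 0, 0; 0, 1, 0; 0, 0, (x : ℂ)⁻¹]

def L23 (x : ℂˣ) : Matrix (Fin 3) (Fin 3) ℂ :=
  !![1, 0, 0; 0, (x : ℂ), 0; 0, 0, (x : ℂ)⁻¹]

/-! All three `L`-matrices are diagonal, so both sides of the local Yang–Baxter equation are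
diagonal and the equation amounts to three monomial identities between `x, y, z` and `u, v, w`,
which each of `T1, …, T4` satisfies. -/

open Matrix

theorem L12_eq_diagonal (x : ℂˣ) : L12 x = diagonal ![(x : ℂ), (x : ℂ)⁻¹, 1] := by
  ext i j
  fin_cases i <;> fin_cases j <;> rfl

theorem L13_eq_diagonal (x : ℂˣ) : L13 x = diagonal ![(x : ℂ), 1, (x : ℂ)⁻¹] := by
  ext i j
  fin_cases i <;> fin_cases j <;> rfl

theorem L23_eq_diagonal (x : ℂˣ) : L23 x = diagonal ![1, (x : ℂ), (x : ℂ)⁻¹] := by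
  ext i j
  fin_cases i <;> fin_cases j <;> rfl

theorem L12_mul_L13_mul_L23 (u v w : ℂˣ) :
    L12 u * L13 v * L23 w =
      diagonal ![(u : ℂ) * v, (u : ℂ)⁻¹ * w, (v : ℂ)⁻¹ * (w : ℂ)⁻¹] := by
  simp only [L12_eq_diagonal, L13_eq_diagonal, L23_eq_diagonal, diagonal_mul_diagonal]
  congr 1
  ext i
  fin_cases i <;> simp

theorem L23_mul_L13_mul_L12 (x y z : ℂˣ) :
    L23 z * L13 y * L12 x =
      diagonal ![(y : ℂ) * x, (z : ℂ) * (x : ℂ)⁻¹, (z : ℂ)⁻¹ * (y : ℂ)⁻¹] := by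
  simp only [L12_eq_diagonal, L13_eq_diagonal, L23_eq_diagonal, diagonal_mul_diagonal]
  congr 1
  ext i
  fin_cases i <;> simp

theorem L12_mul_L13_mul_L23_eq_iff (x y z u v w : ℂˣ) :
    L12 u * L13 v * L23 w = L23 z * L13 y * L12 x ↔
      u * v = y * x ∧ u⁻¹ * w = z * x⁻¹ ∧ v⁻¹ * w⁻¹ = z⁻¹ * y⁻¹ := by
  rw [L12_mul_L13_mul_L23, L23_mul_L13_mul_L12, diagonal_injective.eq_iff]
  simp only [vecCons_inj, and_true, Units.ext_iff, Units.val_mul, Units.val_inv_eq_inv_val]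

theorem relations_of_eq_T1_or_T2_or_T3_or_T4 {x y z u v w : ℂˣ}
    (h : (u, v, w) = T1 (x, y, z) ∨ (u, v, w) = T2 (x, y, z) ∨
      (u, v, w) = T3 (x, y, z) ∨ (u, v, w) = T4 (x, y, z)) :
    u * v = y * x ∧ u⁻¹ * w = z * x⁻¹ ∧ v⁻¹ * w⁻¹ = z⁻¹ * y⁻¹ := by
  rcases h with h | h | h | h <;>
    simp only [T1, T2, T3, T4, Prod.mk.injEq] at h <;>
    obtain ⟨rfl, rfl, rfl⟩ := h <;>
    simp only [Units.ext_iff] <;> push_cast <;> field_simp <;>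
    exact ⟨trivial, trivial, trivial⟩

theorem Lax_representation_T1_T2_T3_T4 :
    ∀ x y z u v w : ℂˣ,
      ((u, v, w) = T1 (x, y, z) →
        L12 u * L13 v * L23 w = L23 z * L13 y * L12 x) ∧
      ((u, v, w) = T2 (x, y, z) →
        L12 u * L13 v * L23 w = L23 z * L13 y * L12 x) ∧
      ((u, v, w) = T3 (x, y, z) →
        L12 u * L13 v * L23 w = L23 z * L13 y * L12 x) ∧
      ((u, v, w) = T4 (x, y, z) →
        L12 u * L13 v * L23 w = L23 z * L13 y * L12 x) := by
  intro x y z u v w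
  refine ⟨fun h => ?_, fun h => ?_, fun h => ?_, fun h => ?_⟩ <;>
    exact (L12_mul_L13_mul_L23_eq_iff x y z u v w).mpr
      (relations_of_eq_T1_or_T2_or_T3_or_T4 (by tauto))
end
end

section
/- Let G be an arbitrary group. The map 𝐓₁ : G³ → G³ defined by 𝐓₁(x,y,z) = (y, x, y·z·x⁻¹) satisfies the tetrahedron equation T¹²³ ∘ T¹⁴⁵ ∘ T²⁴⁶ ∘ T³⁵⁶ = T³⁵⁶ ∘ T²⁴⁶ ∘ T¹⁴⁵ ∘ T¹²³. Moreover (𝐓₁ ∘ 𝐓₁)(x,y,z) = (x, y, x·y·z·x⁻¹·y⁻¹) for all x,y,z ∈ G; hence if G is noncommutative, then 𝐓₁ is not involutive. -/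
variable {G : Type*} [Group G]

/-- The map `𝐓₁(x,y,z) = (y, x, y·z·x⁻¹)` on `G³` for an arbitrary group `G`. -/
def Tb1 : G × G × G → G × G × G := fun (x, y, z) => (y, x, y * z * x⁻¹)

section Lifts

variable {X : Type*} (T : X × X × X → X × X × X) (a b c d e f : X)

@[simp]
theorem lift123_apply :
    lift123 T (a, b, c, d, e, f) =
      ((T (a, b, c)).1, (T (a, b, c)).2.1, (T (a, b, c)).2.2, d, e, f) := rfl

@[simp]
theorem lift145_apply :
    lift145 T (a, b, c, d, e, f) =
      ((T (a, d, e)).1, b, c, (T (a, d, e)).2.1, (T (a, d, e)).2.2, f) := rfl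

@[simp]
theorem lift246_apply :
    lift246 T (a, b, c, d, e, f) =
      (a, (T (b, d, f)).1, c, (T (b, d, f)).2.1, e, (T (b, d, f)).2.2) := rfl

@[simp]
theorem lift356_apply :
    lift356 T (a, b, c, d, e, f) =
      (a, b, (T (c, e, f)).1, d, (T (c, e, f)).2.1, (T (c, e, f)).2.2) := rfl

end Lifts

@[simp]
theorem Tb1_apply (x y z : G) : Tb1 (x, y, z) = (y, x, y * z * x⁻¹) := rfl

theorem isTetrahedronMap_Tb1 : IsTetrahedronMap (Tb1 (G := G)) := by
  funext ⟨a, b, c, d, e, f⟩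
  simp only [Function.comp_apply, lift123_apply, lift145_apply, lift246_apply, lift356_apply,
    Tb1_apply, Prod.mk.injEq]
  refine ⟨?_, ?_, ?_, ?_, ?_, ?_⟩ <;> group

theorem Tb1_comp_Tb1_apply (x y z : G) :
    (Tb1 ∘ Tb1) (x, y, z) = (x, y, x * y * z * x⁻¹ * y⁻¹) := by
  simp only [Function.comp_apply, Tb1_apply, Prod.mk.injEq, true_and]
  group

theorem Tb1_comp_Tb1_eq_id_iff :
    Tb1 ∘ Tb1 = (id : G × G × G → G × G × G) ↔ ∀ a b : G, a * b = b * a := by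
  constructor
  · intro h a b
    have hab : a * b * 1 * a⁻¹ * b⁻¹ = 1 := by
      simpa only [Tb1_comp_Tb1_apply, id] using congrArg (fun g => (g (a, b, 1)).2.2) h
    rw [mul_one, ← commutatorElement_def] at hab
    exact commutatorElement_eq_one_iff_mul_comm.mp hab
  · intro hcomm
    funext ⟨x, y, z⟩
    simp only [Tb1_comp_Tb1_apply, id, Prod.mk.injEq, true_and]
    calc x * y * z * x⁻¹ * y⁻¹ = z * (x * y) * (y * x)⁻¹ := by rw [← hcomm (x * y) z]; group
      _ = z := by rw [hcomm x y]; group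

theorem Tb1_tetrahedron_noninvolutive (G : Type*) [Group G] :
    IsTetrahedronMap (Tb1 (G := G)) ∧
    (∀ x y z : G, (Tb1 ∘ Tb1) (x, y, z) = (x, y, x * y * z * x⁻¹ * y⁻¹)) ∧
    ((∃ a b : G, a * b ≠ b * a) → Tb1 ∘ Tb1 ≠ (id : G × G × G → G × G × G)) := by
  refine ⟨isTetrahedronMap_Tb1, Tb1_comp_Tb1_apply, ?_⟩
  rintro ⟨a, b, hab⟩ h
  exact hab (Tb1_comp_Tb1_eq_id_iff.mp h a b)
end

section
/- Let G be an arbitrary group. The map 𝐓₂ : G³ → G³ defined by 𝐓₂(x,y,z) = (y·x·z⁻¹, z, y) satisfies the tetrahedron equation T¹²³ ∘ T¹⁴⁵ ∘ T²⁴⁶ ∘ T³⁵⁶ = T³⁵⁶ ∘ T²⁴⁶ ∘ T¹⁴⁵ ∘ T¹²³. Moreover, if G is noncommutative, then 𝐓₂ is not involutive: there exists (x,y,z) ∈ G³ with (𝐓₂ ∘ 𝐓₂)(x,y,z) ≠ (x,y,z). -/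
variable {G : Type*} [Group G]

/-- The map `𝐓₂(x,y,z) = (y·x·z⁻¹, z, y)` on `G³` for an arbitrary group `G`. -/
def Tb2 : G × G × G → G × G × G := fun (x, y, z) => (y * x * z⁻¹, z, y)

@[simp]
theorem Tb2_apply (x y z : G) : Tb2 (x, y, z) = (y * x * z⁻¹, z, y) := rfl

theorem Tb2_isTetrahedronMap : IsTetrahedronMap (Tb2 (G := G)) := by
  funext ⟨a, b, c, d, e, f⟩
  -- On factors 2–6 both sides act by the same permutation; only factor 1 is a group identity.
  simp only [lift123, lift145, lift246, lift356, Tb2_apply, Function.comp_apply, Prod.mk.injEq,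
    and_true]
  group

theorem Tb2_comp_Tb2_apply (x y z : G) :
    (Tb2 ∘ Tb2) (x, y, z) = (z * (y * x * z⁻¹) * y⁻¹, y, z) := rfl

theorem Tb2_comp_Tb2_apply_eq_self_iff (x y z : G) :
    (Tb2 ∘ Tb2) (x, y, z) = (x, y, z) ↔ z * y * x = x * y * z := by
  rw [Tb2_comp_Tb2_apply, Prod.mk.injEq, and_iff_left (by simp), mul_inv_eq_iff_eq_mul,
    ← mul_assoc, ← mul_assoc, mul_inv_eq_iff_eq_mul]

theorem Tb2_tetrahedron_noninvolutive (G : Type*) [Group G] :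
    IsTetrahedronMap (Tb2 (G := G)) ∧
    ((∃ a b : G, a * b ≠ b * a) →
      ∃ x y z : G, (Tb2 ∘ Tb2) (x, y, z) ≠ (x, y, z)) := by
  refine ⟨Tb2_isTetrahedronMap, ?_⟩
  rintro ⟨a, b, hab⟩
  refine ⟨1, b, a, fun h => hab ?_⟩
  simpa using (Tb2_comp_Tb2_apply_eq_self_iff 1 b a).mp h
end

section
/- Let G be an arbitrary group. The map 𝐓̂₁ : G³ → G³ defined by 𝐓̂₁(x,y,z) = (x, x·z, x⁻¹·y) satisfies the tetrahedron equation T¹²³ ∘ T¹⁴⁵ ∘ T²⁴⁶ ∘ T³⁵⁶ = T³⁵⁶ ∘ T²⁴⁶ ∘ T¹⁴⁵ ∘ T¹²³ and is involutive: 𝐓̂₁ ∘ 𝐓̂₁ = id. -/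
variable {G : Type*} [Group G]

/-- The map `𝐓̂₁(x,y,z) = (x, x·z, x⁻¹·y)` on `G³` for an arbitrary group `G`. -/
def Tbh1 : G × G × G → G × G × G := fun (x, y, z) => (x, x * z, x⁻¹ * y)

@[simp]
theorem Tbh1_apply (x y z : G) : Tbh1 (x, y, z) = (x, x * z, x⁻¹ * y) := rfl

theorem Tbh1_involutive : Function.Involutive (Tbh1 (G := G)) := by
  rintro ⟨x, y, z⟩
  simp

theorem Tbh1_isTetrahedronMap : IsTetrahedronMap (Tbh1 (G := G)) := by
  funext ⟨a, b, c, d, e, f⟩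
  have lhs : (lift123 Tbh1 ∘ lift145 Tbh1 ∘ lift246 Tbh1 ∘ lift356 Tbh1) (a, b, c, d, e, f) =
      (a, a * c, a⁻¹ * b, a * c * f, a⁻¹ * b * c⁻¹ * e, b⁻¹ * d) := by
    simp [lift123, lift145, lift246, lift356, mul_assoc]
  have rhs : (lift356 Tbh1 ∘ lift246 Tbh1 ∘ lift145 Tbh1 ∘ lift123 Tbh1) (a, b, c, d, e, f) =
      (a, a * c, a⁻¹ * b, a * c * f, a⁻¹ * b * c⁻¹ * e, b⁻¹ * d) := by
    simp [lift123, lift145, lift246, lift356, mul_assoc]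
  exact lhs.trans rhs.symm

theorem Tbh1_tetrahedron_involutive (G : Type*) [Group G] :
    IsTetrahedronMap (Tbh1 (G := G)) ∧ (Tbh1 ∘ Tbh1 = (id : G × G × G → G × G × G)) :=
  ⟨Tbh1_isTetrahedronMap, Tbh1_involutive.comp_self⟩
end

section
/- Let G be an arbitrary group. The map 𝐓̂₂ : G³ → G³ defined by 𝐓̂₂(x,y,z) = (y·z⁻¹, x·z, z) satisfies the tetrahedron equation T¹²³ ∘ T¹⁴⁵ ∘ T²⁴⁶ ∘ T³⁵⁶ = T³⁵⁶ ∘ T²⁴⁶ ∘ T¹⁴⁵ ∘ T¹²³ and is involutive: 𝐓̂₂ ∘ 𝐓̂₂ = id. -/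
variable {G : Type*} [Group G]

/-- The map `𝐓̂₂(x,y,z) = (y·z⁻¹, x·z, z)` on `G³` for an arbitrary group `G`. -/
def Tbh2 : G × G × G → G × G × G := fun (x, y, z) => (y * z⁻¹, x * z, z)

@[simp]
theorem Tbh2_apply (x y z : G) : Tbh2 (x, y, z) = (y * z⁻¹, x * z, z) := rfl

theorem Tbh2_involutive : Function.Involutive (Tbh2 (G := G)) := by
  rintro ⟨x, y, z⟩
  simp

theorem lift123_comp_lift145_comp_lift246_comp_lift356_Tbh2_apply (a b c d e f : G) :
    (lift123 Tbh2 ∘ lift145 Tbh2 ∘ lift246 Tbh2 ∘ lift356 Tbh2) (a, b, c, d, e, f) =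
      (d * e⁻¹, b * c⁻¹ * e * f⁻¹, e * f⁻¹, a * c * f, c * f, f) := by
  simp [lift123, lift145, lift246, lift356, mul_assoc]

theorem lift356_comp_lift246_comp_lift145_comp_lift123_Tbh2_apply (a b c d e f : G) :
    (lift356 Tbh2 ∘ lift246 Tbh2 ∘ lift145 Tbh2 ∘ lift123 Tbh2) (a, b, c, d, e, f) =
      (d * e⁻¹, b * c⁻¹ * e * f⁻¹, e * f⁻¹, a * c * f, c * f, f) := by
  simp [lift123, lift145, lift246, lift356, mul_assoc]

theorem Tbh2_isTetrahedronMap : IsTetrahedronMap (Tbh2 (G := G)) := by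
  funext ⟨a, b, c, d, e, f⟩
  rw [lift123_comp_lift145_comp_lift246_comp_lift356_Tbh2_apply,
    lift356_comp_lift246_comp_lift145_comp_lift123_Tbh2_apply]

theorem Tbh2_tetrahedron_involutive (G : Type*) [Group G] :
    IsTetrahedronMap (Tbh2 (G := G)) ∧ (Tbh2 ∘ Tbh2 = (id : G × G × G → G × G × G)) :=
  ⟨Tbh2_isTetrahedronMap, Tbh2_involutive.comp_self⟩
end
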